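/- Let H be a finite Heisenberg p-group with center Z and let φ be a nontrivial character of Z. Then any irreducible complex representation of H with central character φ has dimension [H:Z]^{1/2}, and any two irreducible representations of H with central character φ are isomorphic. -/

import Mathlib

/-!
For a representation with central character `φ`, conjugating `x` by `y` multiplies it by the
central commutator `[y, x]`, so the character at `x` is multiplied by `φ [y, x]`. When `x` is not
central, nondegeneracy provides `y` with `φ [y, x] ≠ 1`, hence the character is supported on the
centre `Z`, where it equals `φ · dim`. The averaging formula
`|H| · dim Hom_H(V, W) = ∑ χ_W(g) χ_V(g⁻¹)` then gives `|H| · dim Hom_H(V, W) = |Z| dim V dim W`.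
For `W = V` irreducible, Schur's lemma makes the left side `|H|`, so `(dim V)² = [H : Z]`; for two
irreducibles the space of intertwiners is then nonzero, and a nonzero intertwiner between
irreducibles is an isomorphism.
-/

/-- A representation is irreducible: nonzero, and every invariant submodule is `⊥` or `⊤`. -/
def IrreducibleRep {H : Type*} [Group H] {V : Type*} [AddCommGroup V] [Module ℂ V]
    (ρ : Representation ℂ H V) : Prop :=
  (⊥ : Submodule ℂ V) ≠ ⊤ ∧
    ∀ p : Submodule ℂ V, (∀ h : H, ∀ v ∈ p, ρ h v ∈ p) → p = ⊥ ∨ p = ⊤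

open scoped commutatorElement

open Module Representation Subgroup

theorem IrreducibleRep.isIrreducible {G V : Type*} [Group G] [AddCommGroup V] [Module ℂ V]
    {ρ : Representation ℂ G V} (hρ : IrreducibleRep ρ) : ρ.IsIrreducible where
  exists_pair_ne := ⟨⊥, ⊤, fun h => hρ.1 congr(($h).toSubmodule)⟩
  eq_bot_or_eq_top W := (hρ.2 W.toSubmodule fun g _ hv => W.apply_mem_toSubmodule g hv).imp
    Subrepresentation.ext Subrepresentation.ext

namespace Representation

section Irreducible

variable {k G V W : Type*} [Field k] [Monoid G] [AddCommGroup V] [Module k V]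
  [AddCommGroup W] [Module k W]

theorem IsIrreducible.nontrivial (ρ : Representation k G V) [ρ.IsIrreducible] :
    Nontrivial V := by
  by_contra h
  have := not_nontrivial_iff_subsingleton.mp h
  exact bot_ne_top (α := Subrepresentation ρ) (Subrepresentation.ext (Subsingleton.elim _ _))

theorem IsIrreducible.nonempty_equiv_of_finrank_intertwiningMap_ne_zero
    {ρ : Representation k G V} {σ : Representation k G W} [ρ.IsIrreducible] [σ.IsIrreducible]
    (h : finrank k (IntertwiningMap ρ σ) ≠ 0) : Nonempty (Equiv ρ σ) := by
  by_contra hempty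
  have := not_nonempty_iff.mp hempty
  exact h finrank_zero_of_subsingleton

end Irreducible

def HasCentralCharacter {k G V : Type*} [Field k] [Group G] [AddCommGroup V] [Module k V]
    (ρ : Representation k G V) (φ : center G →* kˣ) : Prop :=
  ∀ (z : center G) (v : V), ρ z v = (φ z : k) • v

section CentralCharacter

variable {k H V W : Type*} [Field k] [Group H] [AddCommGroup V] [Module k V]
  [AddCommGroup W] [Module k W] {ρ : Representation k H V} {σ : Representation k H W}
  {φ : center H →* kˣ}

theorem HasCentralCharacter.character_center [FiniteDimensional k V]
    (hρ : ρ.HasCentralCharacter φ) (z : center H) : ρ.character z = φ z * finrank k V := by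
  have : ρ z = (φ z : k) • LinearMap.id := LinearMap.ext (hρ z)
  rw [character, this, map_smul, LinearMap.trace_id, smul_eq_mul]

theorem HasCentralCharacter.character_eq_zero_of_conj_eq_mul (hρ : ρ.HasCentralCharacter φ)
    {x y : H} {z : center H} (hz : φ z ≠ 1) (hconj : y * x * y⁻¹ = z * x) :
    ρ.character x = 0 := by
  have hmul : ρ (z * x) = (φ z : k) • ρ x := by
    ext v
    rw [map_mul, Module.End.mul_apply, hρ, LinearMap.smul_apply]
  have h : ρ.character x = (φ z : k) * ρ.character x := calc
    ρ.character x = ρ.character (y * x * y⁻¹) := (char_conj ρ x y).symm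
    _ = (φ z : k) * ρ.character x := by
      simp only [hconj, character, hmul, map_smul, smul_eq_mul]
  have hz' : (φ z : k) ≠ 1 := fun h => hz (Units.val_eq_one.mp h)
  by_contra hx
  exact hz' (mul_right_cancel₀ hx (by rw [← h, one_mul]))

variable (hcomm : ∀ x y : H, ⁅x, y⁆ ∈ center H)
  (hnd : ∀ x : H, (∀ y : H, φ ⟨⁅x, y⁆, hcomm x y⟩ = 1) → x ∈ center H)
include hnd

theorem HasCentralCharacter.character_eq_zero_of_notMem_center (hρ : ρ.HasCentralCharacter φ)
    {x : H} (hx : x ∉ center H) : ρ.character x = 0 := by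
  obtain ⟨y, hy⟩ := not_forall.mp (mt (hnd x) hx)
  refine hρ.character_eq_zero_of_conj_eq_mul (y := y) (z := ⟨⁅x, y⁆, hcomm x y⟩⁻¹)
    (by rwa [map_inv, inv_ne_one]) ?_
  simp only [InvMemClass.coe_inv, commutatorElement_def]
  group

theorem HasCentralCharacter.sum_character_mul_character_inv [Fintype H]
    [FiniteDimensional k V] [FiniteDimensional k W]
    (hρ : ρ.HasCentralCharacter φ) (hσ : σ.HasCentralCharacter φ) :
    ∑ g, σ.character g * ρ.character g⁻¹ = Nat.card (center H) * (finrank k V * finrank k W) := by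
  classical
  have hcentral (z : center H) :
      σ.character z * ρ.character (z : H)⁻¹ = finrank k V * finrank k W := by
    rw [← InvMemClass.coe_inv, hσ.character_center, hρ.character_center, map_inv,
      mul_mul_mul_comm, ← Units.val_mul, mul_inv_cancel, Units.val_one, one_mul, mul_comm]
  calc ∑ g, σ.character g * ρ.character g⁻¹
      = ∑ g with g ∈ center H, σ.character g * ρ.character g⁻¹ :=
        (Finset.sum_filter_of_ne fun g _ hg => by_contra fun hx =>
          hg (by rw [hσ.character_eq_zero_of_notMem_center hcomm hnd hx, zero_mul])).symm
    _ = ∑ z : center H, σ.character z * ρ.character (z : H)⁻¹ :=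
        Finset.sum_subtype _ (by simp) _
    _ = Nat.card (center H) * (finrank k V * finrank k W) := by
        simp only [hcentral, Finset.sum_const, Finset.card_univ, nsmul_eq_mul,
          Nat.card_eq_fintype_card]

theorem HasCentralCharacter.card_mul_finrank_intertwiningMap [CharZero k] [Fintype H]
    [FiniteDimensional k V] [FiniteDimensional k W]
    (hρ : ρ.HasCentralCharacter φ) (hσ : σ.HasCentralCharacter φ) :
    Nat.card H * finrank k (IntertwiningMap ρ σ) =
      Nat.card (center H) * (finrank k V * finrank k W) := by
  have hH : (Nat.card H : k) ≠ 0 := Nat.cast_ne_zero.mpr Nat.card_pos.ne'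
  have := invertibleOfNonzero hH
  have h := card_inv_mul_sum_char_mul_char_eq_finrank ρ σ
  rw [hρ.sum_character_mul_character_inv hcomm hnd hσ, inv_mul_eq_iff_eq_mul₀ hH] at h
  exact_mod_cast h.symm

theorem HasCentralCharacter.finrank_sq_eq_index [CharZero k] [IsAlgClosed k] [Fintype H]
    [FiniteDimensional k V] [ρ.IsIrreducible] (hρ : ρ.HasCentralCharacter φ) :
    finrank k V ^ 2 = (center H).index := by
  have h := hρ.card_mul_finrank_intertwiningMap hcomm hnd hρ
  rw [IsIrreducible.finrank_intertwiningMap_self, mul_one, ← (center H).card_mul_index] at h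
  rw [sq]
  exact (Nat.eq_of_mul_eq_mul_left Nat.card_pos h).symm

theorem HasCentralCharacter.nonempty_equiv [CharZero k] [Fintype H]
    [FiniteDimensional k V] [FiniteDimensional k W] [ρ.IsIrreducible] [σ.IsIrreducible]
    (hρ : ρ.HasCentralCharacter φ) (hσ : σ.HasCentralCharacter φ) :
    Nonempty (Equiv ρ σ) := by
  have := IsIrreducible.nontrivial ρ
  have := IsIrreducible.nontrivial σ
  refine IsIrreducible.nonempty_equiv_of_finrank_intertwiningMap_ne_zero
    (right_ne_zero_of_mul (a := Nat.card H) ?_)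
  rw [hρ.card_mul_finrank_intertwiningMap hcomm hnd hσ]
  exact mul_ne_zero Nat.card_pos.ne' (mul_ne_zero finrank_pos.ne' finrank_pos.ne')

end CentralCharacter

end Representation

theorem stone_von_neumann_general {H : Type*} [Group H] [Fintype H]
    (hcomm : ∀ x y : H, ⁅x, y⁆ ∈ Subgroup.center H)
    (φ : ↥(Subgroup.center H) →* ℂˣ)
    (hnd : ∀ x : H, (∀ y : H, φ ⟨⁅x, y⁆, hcomm x y⟩ = 1) → x ∈ Subgroup.center H)
    {V W : Type*} [AddCommGroup V] [Module ℂ V] [AddCommGroup W] [Module ℂ W]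
    [FiniteDimensional ℂ V] [FiniteDimensional ℂ W]
    (ρ : Representation ℂ H V) (σ : Representation ℂ H W)
    (hρ : IrreducibleRep ρ) (hσ : IrreducibleRep σ)
    (hρc : ∀ (z : ↥(Subgroup.center H)) (v : V), ρ (z : H) v = (φ z : ℂ) • v)
    (hσc : ∀ (z : ↥(Subgroup.center H)) (w : W), σ (z : H) w = (φ z : ℂ) • w) :
    Module.finrank ℂ V ^ 2 = (Subgroup.center H).index ∧
      ∃ e : V ≃ₗ[ℂ] W, ∀ (h : H) (v : V), e (ρ h v) = σ h (e v) := by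
  have := hρ.isIrreducible
  have := hσ.isIrreducible
  have hρφ : ρ.HasCentralCharacter φ := hρc
  obtain ⟨e⟩ := hρφ.nonempty_equiv hcomm hnd hσc
  exact ⟨hρφ.finrank_sq_eq_index hcomm hnd, e.toLinearEquiv, e.toIntertwiningMap.isIntertwining⟩

/-- Stone–von Neumann for finite Heisenberg `p`-groups: if `H` is a finite Heisenberg
`p`-group with center `Z` (i.e. commutators are central, `H/Z` is elementary abelian,
and the pairing `(x,y) ↦ φ([x,y])` is nondegenerate for the nontrivial central
character `φ`), then any irreducible complex representation with central character `φ`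
has dimension `[H:Z]^{1/2}`, and any two such are isomorphic. -/
theorem stone_von_neumann {p : ℕ} [Fact p.Prime] {H : Type*} [Group H] [Fintype H]
    (hp : IsPGroup p H)
    (hcomm : ∀ x y : H, ⁅x, y⁆ ∈ Subgroup.center H)
    (helem : ∀ x : H, x ^ p ∈ Subgroup.center H)
    (φ : ↥(Subgroup.center H) →* ℂˣ) (hφ : φ ≠ 1)
    (hnd : ∀ x : H, (∀ y : H, φ ⟨⁅x, y⁆, hcomm x y⟩ = 1) → x ∈ Subgroup.center H)
    {V W : Type*} [AddCommGroup V] [Module ℂ V] [AddCommGroup W] [Module ℂ W]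
    [FiniteDimensional ℂ V] [FiniteDimensional ℂ W]
    (ρ : Representation ℂ H V) (σ : Representation ℂ H W)
    (hρ : IrreducibleRep ρ) (hσ : IrreducibleRep σ)
    (hρc : ∀ (z : ↥(Subgroup.center H)) (v : V), ρ (z : H) v = (φ z : ℂ) • v)
    (hσc : ∀ (z : ↥(Subgroup.center H)) (w : W), σ (z : H) w = (φ z : ℂ) • w) :
    Module.finrank ℂ V ^ 2 = (Subgroup.center H).index ∧
      ∃ e : V ≃ₗ[ℂ] W, ∀ (h : H) (v : V), e (ρ h v) = σ h (e v) :=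
  stone_von_neumann_general hcomm φ hnd ρ σ hρ hσ hρc hσc
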